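/- Let (Ω, 𝒜, P) be a probability space, T a finite rooted tree with root v0 and levels α satisfying the local Bonferroni condition, t : V → {0,1} a labeling with first-true set F, and R(v) events with P(R(v)) ≤ α(v) for all v ∈ F. Then P(⋃_{v ∈ F} R(v)) ≤ α(v0). -/

import Mathlib

/-!
The events `R v`, `v ∈ F`, are bounded by the union bound, so it suffices that
`∑_{v ∈ F} α v ≤ α v₀`. No vertex of `F` is a proper ancestor of another, and for any
such antichain `A` one shows `∑_{w ∈ A below v} α w ≤ α v` for every vertex `v` by
induction on the subtree of `v`: either `v ∈ A` and it is the only vertex of `A` below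
`v`, or `A` below `v` splits disjointly over the children of `v`, and the local
Bonferroni condition absorbs the sum over the children.
-/

open Function MeasureTheory
open scoped NNReal ENNReal

/-- A finite rooted tree, encoded by a parent function. The root is a fixed
point of `parent`, and iterating `parent` from any vertex reaches the root. -/
structure CaDTree (V : Type) [Fintype V] [DecidableEq V] where
  root : V
  parent : V → V
  parent_root : parent root = root
  reaches_root : ∀ v, ∃ n, parent^[n] v = root

namespace CaDTree

variable {V : Type} [Fintype V] [DecidableEq V] (T : CaDTree V)

/-- `u` is an ancestor of `v` (including `v` itself). -/
def Ancestor (u v : V) : Prop := ∃ n, T.parent^[n] v = u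

/-- `u` is a proper ancestor of `v`. -/
def ProperAncestor (u v : V) : Prop := T.Ancestor u v ∧ u ≠ v

/-- The set of (immediate) children of `v`. -/
def children (v : V) : Finset V :=
  Finset.univ.filter (fun w => T.parent w = v ∧ w ≠ T.root)

/-- A leaf is a vertex without children. -/
def IsLeaf (v : V) : Prop := T.children v = ∅

/-- Depth of a vertex: distance to the root along the parent map. -/
noncomputable def depth (v : V) : ℕ := Nat.find (T.reaches_root v)

/-- The tree is complete of depth `L`: every leaf lies at depth `L`. -/
def CompleteDepth (L : ℕ) : Prop := ∀ v, T.IsLeaf v → T.depth v = L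

/-- Local Bonferroni condition for the levels `α`. -/
def LocalBonferroni (α : V → ℝ≥0) : Prop :=
  ∀ v, ¬ T.IsLeaf v → ∑ w ∈ T.children v, α w ≤ α v

/-- The first-true set of a labeling: vertices labeled `true` all of whose
proper ancestors are labeled `false`. -/
noncomputable def firstTrue (t : V → Bool) : Finset V :=
  letI := Classical.decPred (fun v => t v = true ∧ ∀ u, T.ProperAncestor u v → t u = false)
  Finset.univ.filter (fun v => t v = true ∧ ∀ u, T.ProperAncestor u v → t u = false)

/-- An antichain: no vertex of `A` is an ancestor of another vertex of `A`. -/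
def IsAntichainTree (A : Finset V) : Prop :=
  ∀ u ∈ A, ∀ v ∈ A, u ≠ v → ¬ T.Ancestor u v

end CaDTree

namespace CaDTree

open Finset

variable {V : Type} [Fintype V] [DecidableEq V] (T : CaDTree V)

lemma mem_children {v c : V} : c ∈ T.children v ↔ T.parent c = v ∧ c ≠ T.root := by
  simp [children]

lemma ancestor_refl (v : V) : T.Ancestor v v := ⟨0, rfl⟩

lemma ancestor_parent (v : V) : T.Ancestor (T.parent v) v := ⟨1, rfl⟩

variable {T}

lemma Ancestor.trans {u v w : V} (huv : T.Ancestor u v) (hvw : T.Ancestor v w) :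
    T.Ancestor u w := by
  obtain ⟨m, rfl⟩ := huv
  obtain ⟨n, rfl⟩ := hvw
  exact ⟨m + n, iterate_add_apply _ _ _ _⟩

lemma Ancestor.of_ne {u w : V} (h : T.Ancestor u w) (hne : u ≠ w) :
    T.Ancestor u (T.parent w) := by
  obtain ⟨_ | k, rfl⟩ := h
  · exact absurd rfl hne
  · exact ⟨k, (iterate_succ_apply _ _ _).symm⟩

lemma Ancestor.total {a b w : V} (ha : T.Ancestor a w) (hb : T.Ancestor b w) :
    T.Ancestor a b ∨ T.Ancestor b a := by
  obtain ⟨m, rfl⟩ := ha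
  obtain ⟨n, rfl⟩ := hb
  rcases le_total m n with h | h
  · exact Or.inr ⟨n - m, by rw [← iterate_add_apply, Nat.sub_add_cancel h]⟩
  · exact Or.inl ⟨m - n, by rw [← iterate_add_apply, Nat.sub_add_cancel h]⟩

lemma eq_root_of_iterate_eq_self {v : V} {k : ℕ} (hk : 0 < k) (h : T.parent^[k] v = v) :
    v = T.root := by
  obtain ⟨n, hn⟩ := T.reaches_root v
  have hcycle : T.parent^[k * n] v = v := iterate_mul T.parent k n ▸ iterate_fixed h n
  rw [← hcycle, ← Nat.sub_add_cancel (Nat.le_mul_of_pos_left n hk), iterate_add_apply, hn,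
    iterate_fixed T.parent_root]

lemma not_ancestor_of_mem_children {v c : V} (hc : c ∈ T.children v) : ¬ T.Ancestor c v := by
  rw [mem_children] at hc
  rintro ⟨m, hm⟩
  exact hc.2 (eq_root_of_iterate_eq_self m.succ_pos (by rw [iterate_succ_apply, hc.1, hm]))

lemma exists_mem_children_ancestor {v w : V} (h : T.Ancestor v w) (hne : w ≠ v) :
    ∃ c ∈ T.children v, T.Ancestor c w := by
  obtain ⟨n, hn⟩ := h
  induction n generalizing w with
  | zero => exact absurd hn hne
  | succ n ih =>
    rw [iterate_succ_apply] at hn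
    by_cases hpw : T.parent w = v
    · refine ⟨w, T.mem_children.2 ⟨hpw, fun hw => hne ?_⟩, T.ancestor_refl w⟩
      rw [← hpw, hw, T.parent_root]
    · obtain ⟨c, hc, hcw⟩ := ih hpw hn
      exact ⟨c, hc, hcw.trans (T.ancestor_parent w)⟩

variable (T)

noncomputable def descendants (v : V) : Finset V :=
  letI := Classical.decPred (T.Ancestor v)
  univ.filter (T.Ancestor v)

@[simp]
lemma mem_descendants {v w : V} : w ∈ T.descendants v ↔ T.Ancestor v w := by
  simp [descendants]

lemma descendants_root : T.descendants T.root = univ :=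
  eq_univ_of_forall fun w => T.mem_descendants.2 (T.reaches_root w)

variable {T}

lemma descendants_ssubset_of_mem_children {v c : V} (hc : c ∈ T.children v) :
    T.descendants c ⊂ T.descendants v := by
  have hvc : T.Ancestor v c := (T.mem_children.1 hc).1 ▸ T.ancestor_parent c
  refine ssubset_iff_of_subset (fun w hw => ?_) |>.2 ⟨v, ?_, ?_⟩
  · exact T.mem_descendants.2 (hvc.trans (T.mem_descendants.1 hw))
  · exact T.mem_descendants.2 (T.ancestor_refl v)
  · exact fun h => not_ancestor_of_mem_children hc (T.mem_descendants.1 h)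

lemma pairwiseDisjoint_descendants_children (v : V) :
    (T.children v : Set V).PairwiseDisjoint T.descendants := by
  intro c₁ hc₁ c₂ hc₂ hne
  refine disjoint_left.2 fun w hw₁ hw₂ => ?_
  rcases (T.mem_descendants.1 hw₁).total (T.mem_descendants.1 hw₂) with h | h
  · exact not_ancestor_of_mem_children hc₁ ((T.mem_children.1 hc₂).1 ▸ h.of_ne hne)
  · exact not_ancestor_of_mem_children hc₂ ((T.mem_children.1 hc₁).1 ▸ h.of_ne hne.symm)

variable {α : V → ℝ≥0}

lemma LocalBonferroni.sum_children_le (hLB : T.LocalBonferroni α) (v : V) :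
    ∑ c ∈ T.children v, α c ≤ α v := by
  by_cases hleaf : T.IsLeaf v
  · simp only [IsLeaf] at hleaf
    simp [hleaf]
  · exact hLB v hleaf

lemma IsAntichainTree.inter_descendants_subset {A : Finset V} (hA : T.IsAntichainTree A)
    {v : V} (hv : v ∈ A) : A ∩ T.descendants v ⊆ {v} := by
  intro w hw
  rw [mem_inter, mem_descendants] at hw
  exact mem_singleton.2 (by_contra fun hne => hA v hv w hw.1 (Ne.symm hne) hw.2)

lemma inter_descendants_subset_biUnion_children (A : Finset V) {v : V} (hv : v ∉ A) :
    A ∩ T.descendants v ⊆ (T.children v).biUnion fun c => A ∩ T.descendants c := by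
  intro w hw
  rw [mem_inter, mem_descendants] at hw
  obtain ⟨c, hc, hcw⟩ := exists_mem_children_ancestor hw.2 (fun h => hv (h ▸ hw.1))
  exact mem_biUnion.2 ⟨c, hc, mem_inter.2 ⟨hw.1, T.mem_descendants.2 hcw⟩⟩

theorem LocalBonferroni.sum_inter_descendants_le (hLB : T.LocalBonferroni α)
    {A : Finset V} (hA : T.IsAntichainTree A) (v : V) :
    ∑ w ∈ A ∩ T.descendants v, α w ≤ α v := by
  by_cases hv : v ∈ A
  · calc ∑ w ∈ A ∩ T.descendants v, α w
        ≤ ∑ w ∈ {v}, α w := sum_le_sum_of_subset (hA.inter_descendants_subset hv)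
      _ = α v := sum_singleton _ _
  · have hdisj : (T.children v : Set V).PairwiseDisjoint fun c => A ∩ T.descendants c :=
      (pairwiseDisjoint_descendants_children v).mono fun _ => inter_subset_right
    calc ∑ w ∈ A ∩ T.descendants v, α w
        ≤ ∑ w ∈ (T.children v).biUnion fun c => A ∩ T.descendants c, α w :=
          sum_le_sum_of_subset (T.inter_descendants_subset_biUnion_children A hv)
      _ = ∑ c ∈ T.children v, ∑ w ∈ A ∩ T.descendants c, α w := sum_biUnion hdisj
      _ ≤ ∑ c ∈ T.children v, α c :=
          sum_le_sum fun c hc => hLB.sum_inter_descendants_le hA c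
      _ ≤ α v := hLB.sum_children_le v
termination_by (T.descendants v).card
decreasing_by exact card_lt_card (descendants_ssubset_of_mem_children hc)

theorem LocalBonferroni.sum_antichain_le_root (hLB : T.LocalBonferroni α)
    {A : Finset V} (hA : T.IsAntichainTree A) : ∑ w ∈ A, α w ≤ α T.root := by
  simpa [descendants_root] using hLB.sum_inter_descendants_le hA T.root

lemma isAntichainTree_firstTrue (t : V → Bool) : T.IsAntichainTree (T.firstTrue t) := by
  intro u hu v hv hne huv
  simp only [firstTrue, mem_filter] at hu hv
  simpa [hu.2.1] using hv.2.2 u ⟨huv, hne⟩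

end CaDTree

theorem union_bound_firstTrue_general {V : Type} [Fintype V] [DecidableEq V]
    (T : CaDTree V) (α : V → ℝ≥0) (hLB : T.LocalBonferroni α)
    (t : V → Bool) {Ω : Type} [MeasurableSpace Ω] (P : Measure Ω)
    (R : V → Set Ω)
    (hlevel : ∀ v ∈ T.firstTrue t, P (R v) ≤ α v) :
    P (⋃ v ∈ T.firstTrue t, R v) ≤ α T.root :=
  calc P (⋃ v ∈ T.firstTrue t, R v)
      ≤ ∑ v ∈ T.firstTrue t, P (R v) := measure_biUnion_finset_le _ _
    _ ≤ ∑ v ∈ T.firstTrue t, (α v : ℝ≥0∞) := Finset.sum_le_sum hlevel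
    _ = ((∑ v ∈ T.firstTrue t, α v : ℝ≥0) : ℝ≥0∞) := (ENNReal.ofNNReal_finsetSum ..).symm
    _ ≤ α T.root := ENNReal.coe_le_coe.2 (hLB.sum_antichain_le_root (T.isAntichainTree_firstTrue t))

/-- union bound over the first-true set combined with the
frontier estimate. -/
theorem union_bound_firstTrue {V : Type} [Fintype V] [DecidableEq V]
    (T : CaDTree V) (α : V → ℝ≥0) (hLB : T.LocalBonferroni α)
    (t : V → Bool) {Ω : Type} [MeasurableSpace Ω] (P : Measure Ω)
    [IsProbabilityMeasure P] (R : V → Set Ω)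
    (hlevel : ∀ v ∈ T.firstTrue t, P (R v) ≤ α v) :
    P (⋃ v ∈ T.firstTrue t, R v) ≤ α T.root :=
  union_bound_firstTrue_general T α hLB t P R hlevel
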